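/- The map z ↦ φ(z)/Φ(z), where φ and Φ are the standard Gaussian density and CDF, is Lipschitz continuous on ℝ with Lipschitz constant 1; equivalently, its derivative is bounded in absolute value by 1 everywhere. -/

import Mathlib

/-!
Write `m = φ / Φ`. Then `m' = -m (z + m)`, so it suffices to show `0 ≤ m (z + m) ≤ 1`.
The lower bound is `φ(z) + z Φ(z) = ∫_{t ≤ z} (z - t) φ(t) dt ≥ 0`,
because `-t φ(t) = φ'(t)`.
For the upper bound let `s` be the positive root of `s² = z s + 1`. The function `Φ - φ s`
vanishes at `-∞` and has derivative `φ (s² - s') ≥ 0`, which gives Birnbaum's inequality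
`Φ ≥ φ s`, i.e. `m ≤ 1 / s`, and hence `m (z + m) ≤ s⁻¹ (z + s⁻¹) = 1`.
-/

open MeasureTheory Set

/-- Standard Gaussian density. -/
noncomputable def stdGaussPdf (z : ℝ) : ℝ :=
  (Real.sqrt (2 * Real.pi))⁻¹ * Real.exp (-z ^ 2 / 2)

/-- Standard Gaussian cumulative distribution function. -/
noncomputable def stdGaussCdf (z : ℝ) : ℝ := ∫ t in Iic z, stdGaussPdf t

open Filter Topology Real

section IntegralIic

variable {E : Type*} [NormedAddCommGroup E] [NormedSpace ℝ E] {f : ℝ → E}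

theorem hasDerivAt_integral_Iic [CompleteSpace E] (hf : Integrable f) (hc : Continuous f)
    (z : ℝ) : HasDerivAt (fun x => ∫ t in Iic x, f t) (f z) z := by
  have hsplit :
      (fun x => ∫ t in Iic x, f t) = fun x => (∫ t in Iic 0, f t) + ∫ t in 0..x, f t := by
    funext x
    rw [← intervalIntegral.integral_Iic_sub_Iic hf.integrableOn hf.integrableOn]
    abel
  rw [hsplit]
  exact (intervalIntegral.integral_hasDerivAt_right hf.intervalIntegrable
    (hc.stronglyMeasurableAtFilter _ _) hc.continuousAt).const_add _

theorem tendsto_integral_Iic_atBot (hf : Integrable f) :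
    Tendsto (fun x => ∫ t in Iic x, f t) atBot (𝓝 0) := by
  have hsplit :
      (fun x => ∫ t in Iic x, f t) = fun x => (∫ t in Iic 0, f t) - ∫ t in x..0, f t := by
    funext x
    rw [← intervalIntegral.integral_Iic_sub_Iic hf.integrableOn hf.integrableOn]
    abel
  rw [hsplit]
  simpa using (tendsto_const_nhds (x := ∫ t in Iic 0, f t)).sub
    (intervalIntegral_tendsto_integral_Iic 0 hf.integrableOn tendsto_id)

end IntegralIic

theorem nonneg_of_hasDerivAt_of_tendsto_atBot {f f' : ℝ → ℝ}
    (hf : ∀ x, HasDerivAt f (f' x) x) (hf' : ∀ x, 0 ≤ f' x) (hlim : Tendsto f atBot (𝓝 0))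
    (z : ℝ) : 0 ≤ f z := by
  refine (monotone_of_deriv_nonneg (fun x => (hf x).differentiableAt) fun x => ?_).le_of_tendsto
    hlim z
  rw [(hf x).deriv]
  exact hf' x

theorem stdGaussPdf_pos (z : ℝ) : 0 < stdGaussPdf z := by
  unfold stdGaussPdf
  positivity

theorem continuous_stdGaussPdf : Continuous stdGaussPdf := by
  unfold stdGaussPdf
  fun_prop

theorem integrable_stdGaussPdf : Integrable stdGaussPdf := by
  convert (integrable_exp_neg_mul_sq (by norm_num : (0:ℝ) < 1/2)).const_mul
    (√(2 * π))⁻¹ using 3 with z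
  unfold stdGaussPdf
  congr 2
  ring

theorem integrable_neg_mul_stdGaussPdf : Integrable fun z => -z * stdGaussPdf z := by
  convert (integrable_mul_exp_neg_mul_sq (by norm_num : (0:ℝ) < 1/2)).const_mul
    (-(√(2 * π))⁻¹) using 2 with z
  unfold stdGaussPdf
  ring_nf

theorem hasDerivAt_stdGaussPdf (z : ℝ) : HasDerivAt stdGaussPdf (-z * stdGaussPdf z) z := by
  have hexponent : HasDerivAt (fun x : ℝ => -x ^ 2 / 2) (-z) z :=
    ((hasDerivAt_pow 2 z).neg.div_const 2).congr_deriv (by norm_num; ring)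
  exact (hexponent.exp.const_mul (√(2 * π))⁻¹).congr_deriv (by unfold stdGaussPdf; ring)

theorem tendsto_stdGaussPdf_atBot : Tendsto stdGaussPdf atBot (𝓝 0) := by
  have hsq : Tendsto (fun z : ℝ => z ^ 2) atBot atTop :=
    ((tendsto_pow_atTop two_ne_zero).comp tendsto_neg_atBot_atTop).congr neg_sq
  have hexponent : Tendsto (fun z : ℝ => -z ^ 2 / 2) atBot atBot :=
    (tendsto_neg_atTop_atBot.comp hsq).atBot_div_const two_pos
  rw [← mul_zero (√(2 * π))⁻¹]
  exact (tendsto_exp_atBot.comp hexponent).const_mul _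

theorem hasDerivAt_stdGaussCdf (z : ℝ) : HasDerivAt stdGaussCdf (stdGaussPdf z) z :=
  hasDerivAt_integral_Iic integrable_stdGaussPdf continuous_stdGaussPdf z

theorem tendsto_stdGaussCdf_atBot : Tendsto stdGaussCdf atBot (𝓝 0) :=
  tendsto_integral_Iic_atBot integrable_stdGaussPdf

theorem integral_Iic_neg_mul_stdGaussPdf (z : ℝ) :
    ∫ t in Iic z, -t * stdGaussPdf t = stdGaussPdf z := by
  simpa using integral_Iic_of_hasDerivAt_of_tendsto' (fun x _ => hasDerivAt_stdGaussPdf x)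
    integrable_neg_mul_stdGaussPdf.integrableOn tendsto_stdGaussPdf_atBot

theorem stdGaussPdf_add_mul_stdGaussCdf_nonneg (z : ℝ) :
    0 ≤ stdGaussPdf z + z * stdGaussCdf z := by
  have hrepr : stdGaussPdf z + z * stdGaussCdf z = ∫ t in Iic z, (z - t) * stdGaussPdf t := by
    have hint := integrable_stdGaussPdf.integrableOn (s := Iic z)
    rw [← integral_Iic_neg_mul_stdGaussPdf, stdGaussCdf, ← integral_const_mul,
      ← integral_add (integrable_neg_mul_stdGaussPdf.integrableOn) (hint.const_mul z)]
    congr 1 with t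
    ring
  rw [hrepr]
  exact setIntegral_nonneg measurableSet_Iic fun t ht =>
    mul_nonneg (sub_nonneg.2 ht) (stdGaussPdf_pos t).le

noncomputable def birnbaumRoot (z : ℝ) : ℝ := (z + √(z ^ 2 + 4)) / 2

theorem birnbaumRoot_sq (z : ℝ) : birnbaumRoot z ^ 2 = z * birnbaumRoot z + 1 := by
  have hsqrt : √(z ^ 2 + 4) ^ 2 = z ^ 2 + 4 := sq_sqrt (by positivity)
  unfold birnbaumRoot
  linear_combination hsqrt / 4

theorem birnbaumRoot_pos (z : ℝ) : 0 < birnbaumRoot z := by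
  have hlt : |z| < √(z ^ 2 + 4) := by
    rw [← sqrt_sq_eq_abs]
    exact sqrt_lt_sqrt (sq_nonneg z) (by linarith)
  unfold birnbaumRoot
  linarith [neg_abs_le z]

theorem birnbaumRoot_le_one {z : ℝ} (hz : z ≤ 0) : birnbaumRoot z ≤ 1 := by
  have hle : √(z ^ 2 + 4) ≤ 2 - z := sqrt_le_iff.2 ⟨by linarith, by nlinarith⟩
  unfold birnbaumRoot
  linarith

theorem hasDerivAt_birnbaumRoot (z : ℝ) :
    HasDerivAt birnbaumRoot (birnbaumRoot z / √(z ^ 2 + 4)) z := by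
  have hsqrt : HasDerivAt (fun x : ℝ => √(x ^ 2 + 4)) (2 * z / (2 * √(z ^ 2 + 4))) z :=
    ((hasDerivAt_pow 2 z).add_const 4).sqrt (by positivity) |>.congr_deriv (by norm_num)
  refine ((hasDerivAt_id z).add hsqrt).div_const 2 |>.congr_deriv ?_
  unfold birnbaumRoot
  field_simp
  ring

theorem birnbaumRoot_div_sqrt_le_sq (z : ℝ) :
    birnbaumRoot z / √(z ^ 2 + 4) ≤ birnbaumRoot z ^ 2 := by
  have hpos : 0 < √(z ^ 2 + 4) := sqrt_pos.2 (by positivity)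
  have hsqrt : √(z ^ 2 + 4) ^ 2 = z ^ 2 + 4 := sq_sqrt (by positivity)
  have hs := birnbaumRoot_pos z
  rw [div_le_iff₀ hpos]
  have hprod : 1 ≤ birnbaumRoot z * √(z ^ 2 + 4) := by
    unfold birnbaumRoot
    nlinarith [sq_nonneg (z * √(z ^ 2 + 4) + z ^ 2 + 2)]
  nlinarith

theorem stdGaussPdf_mul_birnbaumRoot_le_stdGaussCdf (z : ℝ) :
    stdGaussPdf z * birnbaumRoot z ≤ stdGaussCdf z := by
  have hderiv (x : ℝ) : HasDerivAt (fun y => stdGaussCdf y - stdGaussPdf y * birnbaumRoot y)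
      (stdGaussPdf x * (birnbaumRoot x ^ 2 - birnbaumRoot x / √(x ^ 2 + 4))) x :=
    ((hasDerivAt_stdGaussCdf x).sub ((hasDerivAt_stdGaussPdf x).mul
      (hasDerivAt_birnbaumRoot x))).congr_deriv
        (by linear_combination -stdGaussPdf x * birnbaumRoot_sq x)
  have hprod : Tendsto (fun x => stdGaussPdf x * birnbaumRoot x) atBot (𝓝 0) := by
    refine squeeze_zero' ?_ ?_ tendsto_stdGaussPdf_atBot
    · exact .of_forall fun x => (mul_pos (stdGaussPdf_pos x) (birnbaumRoot_pos x)).le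
    · filter_upwards [Iic_mem_atBot 0] with x hx
      exact mul_le_of_le_one_right (stdGaussPdf_pos x).le (birnbaumRoot_le_one hx)
  have hnonneg := nonneg_of_hasDerivAt_of_tendsto_atBot hderiv
    (fun x => mul_nonneg (stdGaussPdf_pos x).le (sub_nonneg.2 (birnbaumRoot_div_sqrt_le_sq x)))
    (by simpa using tendsto_stdGaussCdf_atBot.sub hprod) z
  linarith

theorem stdGaussCdf_pos (z : ℝ) : 0 < stdGaussCdf z :=
  (mul_pos (stdGaussPdf_pos z) (birnbaumRoot_pos z)).trans_le
    (stdGaussPdf_mul_birnbaumRoot_le_stdGaussCdf z)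

noncomputable def invMillsRatio (z : ℝ) : ℝ := stdGaussPdf z / stdGaussCdf z

theorem hasDerivAt_invMillsRatio (z : ℝ) :
    HasDerivAt invMillsRatio (-(invMillsRatio z * (z + invMillsRatio z))) z := by
  have hΦ := (stdGaussCdf_pos z).ne'
  refine ((hasDerivAt_stdGaussPdf z).div (hasDerivAt_stdGaussCdf z) hΦ).congr_deriv ?_
  unfold invMillsRatio
  field_simp
  ring

theorem add_invMillsRatio_nonneg (z : ℝ) : 0 ≤ z + invMillsRatio z := by
  have hΦ := stdGaussCdf_pos z
  have hrepr : z + invMillsRatio z = (stdGaussPdf z + z * stdGaussCdf z) / stdGaussCdf z := by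
    unfold invMillsRatio
    field_simp
    ring
  rw [hrepr]
  exact div_nonneg (stdGaussPdf_add_mul_stdGaussCdf_nonneg z) hΦ.le

theorem invMillsRatio_le_inv_birnbaumRoot (z : ℝ) :
    invMillsRatio z ≤ (birnbaumRoot z)⁻¹ := by
  have hs := birnbaumRoot_pos z
  rw [invMillsRatio, div_le_iff₀ (stdGaussCdf_pos z), ← div_eq_inv_mul, le_div_iff₀ hs]
  exact stdGaussPdf_mul_birnbaumRoot_le_stdGaussCdf z

theorem invMillsRatio_mul_add_le_one (z : ℝ) : invMillsRatio z * (z + invMillsRatio z) ≤ 1 := by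
  have hs := birnbaumRoot_pos z
  have hm := invMillsRatio_le_inv_birnbaumRoot z
  calc invMillsRatio z * (z + invMillsRatio z)
      ≤ (birnbaumRoot z)⁻¹ * (z + (birnbaumRoot z)⁻¹) :=
        mul_le_mul hm (by linarith) (add_invMillsRatio_nonneg z) (by positivity)
    _ = (z * birnbaumRoot z + 1) / birnbaumRoot z ^ 2 := by field_simp
    _ = 1 := by rw [← birnbaumRoot_sq, div_self (by positivity)]

theorem abs_deriv_invMillsRatio_le_one (z : ℝ) : |deriv invMillsRatio z| ≤ 1 := by
  rw [(hasDerivAt_invMillsRatio z).deriv, abs_neg,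
    abs_of_nonneg (mul_nonneg ?_ (add_invMillsRatio_nonneg z))]
  · exact invMillsRatio_mul_add_le_one z
  · exact div_nonneg (stdGaussPdf_pos z).le (stdGaussCdf_pos z).le

/-- The (reflected) Gaussian inverse Mills ratio `z ↦ φ(z)/Φ(z)` is `1`-Lipschitz on `ℝ`,
and its derivative is bounded by `1` in absolute value everywhere. -/
theorem inverse_mills_ratio_lipschitz :
    LipschitzWith 1 (fun z => stdGaussPdf z / stdGaussCdf z) ∧
    ∀ z : ℝ, |deriv (fun z => stdGaussPdf z / stdGaussCdf z) z| ≤ 1 := by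
  refine ⟨lipschitzWith_of_nnnorm_deriv_le
    (fun z => (hasDerivAt_invMillsRatio z).differentiableAt) fun z => ?_,
    abs_deriv_invMillsRatio_le_one⟩
  rw [← NNReal.coe_le_coe, coe_nnnorm, NNReal.coe_one, norm_eq_abs]
  exact abs_deriv_invMillsRatio_le_one z
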